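/- arXiv:math/0701662 — 3 statements merged into one kernel-verified Lean document; each statement's English description precedes it below -/
import Mathlib

section
/- Let C be a smooth projective connected curve of genus g over the complex numbers, let i ≥ 0 be an integer and P a point of C. Let V = H^0(C, ω_C((i+1)P)) be the complete linear system of sections of ω_C((i+1)P). Then the weight of P as a ramification point of V equals g + wt(P), where wt(P) is the Weierstrass weight of P, i.e. the weight of P in the canonical linear system H^0(C, ω_C). -/
/-!
Abstract interface for the geometry of a smooth projective connected curve
over `ℂ`, following Cumino–Esteves–Gatto, "Special ramification loci on the
double product of a general curve".
-/

open scoped BigOperators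

noncomputable section

/-- Abstract model of a smooth projective connected curve over `ℂ`:
it records the (infinitely many) closed points of the curve, its genus, a
canonical divisor `K` (a divisor of the canonical line bundle `ω_C`), and the
function `h0` assigning to every divisor `D` — a finitely supported `ℤ`-valued
function on points — the dimension `h⁰(C, 𝒪_C(D))` of the space of global
sections of the associated line bundle.  The axioms are standard facts valid
on any smooth projective connected curve: `h⁰(𝒪_C) = 1`, `h⁰(ω_C) = g`, `h⁰`
vanishes for divisors of negative degree, adding a point to a divisor changes
`h⁰` by `0` or `1`, and the Riemann–Roch theorem. -/
structure SmoothProjCurve where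
  /-- the closed points of the curve -/
  Point : Type
  /-- a curve over `ℂ` has infinitely many points -/
  [infinitePoint : Infinite Point]
  /-- the genus `g = h⁰(C, ω_C)` -/
  genus : ℕ
  /-- `h0 D = h⁰(C, 𝒪_C(D))` -/
  h0 : (Point →₀ ℤ) → ℕ
  /-- a canonical divisor, i.e. the divisor of a nonzero rational section of `ω_C` -/
  K : Point →₀ ℤ
  h0_trivial : h0 0 = 1
  h0_canonical : h0 K = genus
  h0_of_neg : ∀ D : Point →₀ ℤ, (D.sum fun _ n => n) < 0 → h0 D = 0
  h0_mono : ∀ (D : Point →₀ ℤ) (P : Point), h0 D ≤ h0 (D + Finsupp.single P 1)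
  h0_step : ∀ (D : Point →₀ ℤ) (P : Point), h0 (D + Finsupp.single P 1) ≤ h0 D + 1
  /-- the Riemann–Roch theorem: `h⁰(D) - h⁰(K - D) = deg D + 1 - g` -/
  riemann_roch : ∀ D : Point →₀ ℤ,
    (h0 D : ℤ) - (h0 (K - D) : ℤ) = (D.sum fun _ n => n) + 1 - (genus : ℤ)

attribute [instance] SmoothProjCurve.infinitePoint

namespace SmoothProjCurve

variable (C : SmoothProjCurve)

/-- The divisor `1 ⬝ P`. -/
def pt (P : C.Point) : C.Point →₀ ℤ := Finsupp.single P 1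

/-- The degree of a divisor. -/
def deg (D : C.Point →₀ ℤ) : ℤ := D.sum fun _ n => n

/-- The weight `wt_{|D|}(Q) = Σ_{k=0}^{r} (ε_k(|D|,Q) - k)` of a point `Q` in
the complete linear system `|D| = H⁰(C, 𝒪_C(D))`, of rank `r = h⁰(D) - 1`;
equivalently, the order of vanishing at `Q` of the Wronskian of `|D|`.  It is
computed by the standard formula `wt = (Σ_{j ≥ 1} dim |D|(-jQ)) - r(r+1)/2`,
where `|D|(-jQ)` is the subspace of sections vanishing to order at least `j`
at `Q`, so that `dim |D|(-jQ) = h⁰(D - jQ)`; the sum is truncated at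
`j = deg D` since `h⁰(D - jQ) = 0` for `j > deg D`. -/
def wt (D : C.Point →₀ ℤ) (Q : C.Point) : ℤ :=
  (∑ j ∈ Finset.Icc 1 (C.deg D).toNat, (C.h0 (D - (j : ℤ) • C.pt Q) : ℤ))
    - ((C.h0 D : ℤ) - 1) * (C.h0 D : ℤ) / 2

/-- `Q` is a ramification point of the complete linear system `|D|`. -/
def IsRamPt (D : C.Point →₀ ℤ) (Q : C.Point) : Prop := 0 < C.wt D Q

/-- The Weierstrass weight of `P`: its weight in the canonical system
`H⁰(C, ω_C)`. -/
def wW (P : C.Point) : ℤ := C.wt C.K P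

/-- `P` is a Weierstrass point of `C`. -/
def IsWeierstrass (P : C.Point) : Prop := 0 < C.wW P

/-- The divisor `K + (i+1)P` of the line bundle `ω_C((i+1)P)`, whose complete
linear system is `V_C(i,P) = H⁰(C, ω_C((i+1)P))`. -/
def VDiv (i : ℕ) (P : C.Point) : C.Point →₀ ℤ := C.K + ((i : ℤ) + 1) • C.pt P

end SmoothProjCurve

/-!
Adding the point `Q` to a divisor `D` shifts the sum `Σ_{j ≥ 1} h⁰(D - jQ)` by `h⁰(D)`, while
`h⁰` itself grows by `0` or `1`; so the weight at `Q` grows by `h⁰(D)` in the first case and is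
unchanged in the second. By Riemann–Roch `h⁰(K + kP) = g + k - 1` for `k ≥ 1`: the step from `K`
to `K + P` adds `h⁰(K) = g` to the weight of `P`, and every later step adds nothing.
-/

lemma Finset.sum_Icc_one_eq_sum_range {M : Type*} [AddCommMonoid M] (n : ℕ) (f : ℕ → M) :
    ∑ j ∈ Finset.Icc 1 n, f j = ∑ k ∈ Finset.range n, f (k + 1) := by
  rw [Finset.range_eq_Ico, Finset.sum_Ico_add', zero_add, Finset.Ico_add_one_right_eq_Icc]

lemma Int.natCast_sub_one_mul_ediv_two_eq_choose (n : ℕ) : ((n : ℤ) - 1) * n / 2 = n.choose 2 := by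
  rw [Nat.choose_two_right, Int.natCast_ediv]
  cases n with
  | zero => simp
  | succ n => push_cast; ring_nf

namespace SmoothProjCurve

variable (C : SmoothProjCurve)

lemma deg_add (D E : C.Point →₀ ℤ) : C.deg (D + E) = C.deg D + C.deg E :=
  Finsupp.sum_add_index' (fun _ => rfl) (fun _ _ _ => rfl)

lemma deg_neg (D : C.Point →₀ ℤ) : C.deg (-D) = -C.deg D := by
  simp [deg, Finsupp.sum_neg_index, Finsupp.sum_neg]

lemma deg_smul_pt (k : ℤ) (P : C.Point) : C.deg (k • C.pt P) = k := by
  simp [deg, pt]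

lemma deg_pt (P : C.Point) : C.deg (C.pt P) = 1 := by
  simpa using C.deg_smul_pt 1 P

lemma h0_eq_zero_of_deg_neg {D : C.Point →₀ ℤ} (hD : C.deg D < 0) : C.h0 D = 0 :=
  C.h0_of_neg D hD

lemma riemann_roch_deg (D : C.Point →₀ ℤ) :
    (C.h0 D : ℤ) - C.h0 (C.K - D) = C.deg D + 1 - C.genus :=
  C.riemann_roch D

lemma deg_K : C.deg C.K = 2 * C.genus - 2 := by
  have h := C.riemann_roch_deg C.K
  rw [C.h0_canonical, sub_self, C.h0_trivial] at h
  omega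

lemma h0_K_add_of_deg_pos {E : C.Point →₀ ℤ} (hE : 0 < C.deg E) :
    (C.h0 (C.K + E) : ℤ) = C.genus - 1 + C.deg E := by
  have h := C.riemann_roch_deg (C.K + E)
  rw [sub_add_cancel_left, C.h0_eq_zero_of_deg_neg (D := -E) (by rw [deg_neg]; omega), C.deg_add,
    C.deg_K] at h
  omega

lemma wt_add_choose_h0 (D : C.Point →₀ ℤ) (Q : C.Point) :
    C.wt D Q + (C.h0 D).choose 2
      = ∑ j ∈ Finset.Icc 1 (C.deg D).toNat, (C.h0 (D - (j : ℤ) • C.pt Q) : ℤ) := by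
  rw [wt, Int.natCast_sub_one_mul_ediv_two_eq_choose, sub_add_cancel]

lemma wt_add_pt (D : C.Point →₀ ℤ) (Q : C.Point) :
    C.wt (D + C.pt Q) Q + (C.h0 (D + C.pt Q)).choose 2
      = C.wt D Q + (C.h0 D).choose 2 + C.h0 D := by
  rw [wt_add_choose_h0, wt_add_choose_h0, C.deg_add, C.deg_pt]
  rcases lt_or_ge (C.deg D) 0 with hD_neg | hD_nonneg
  · rw [C.h0_eq_zero_of_deg_neg hD_neg, Int.toNat_of_nonpos hD_neg.le, Int.toNat_of_nonpos (by omega)]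
    simp
  · rw [show (C.deg D + 1).toNat = (C.deg D).toNat + 1 by omega,
      Finset.sum_Icc_one_eq_sum_range, Finset.sum_range_succ', Finset.sum_Icc_one_eq_sum_range]
    congr 1
    · refine Finset.sum_congr rfl fun k _ => ?_
      rw [show ((k + 1 + 1 : ℕ) : ℤ) • C.pt Q = ((k + 1 : ℕ) : ℤ) • C.pt Q + C.pt Q by
        push_cast; rw [add_smul, one_smul], add_sub_add_right_eq_sub]
    · simp

lemma wt_add_pt_of_h0_eq {D : C.Point →₀ ℤ} {Q : C.Point} (h : C.h0 (D + C.pt Q) = C.h0 D) :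
    C.wt (D + C.pt Q) Q = C.wt D Q + C.h0 D := by
  have := C.wt_add_pt D Q
  rw [h] at this
  linarith

lemma wt_add_pt_of_h0_eq_succ {D : C.Point →₀ ℤ} {Q : C.Point}
    (h : C.h0 (D + C.pt Q) = C.h0 D + 1) : C.wt (D + C.pt Q) Q = C.wt D Q := by
  have := C.wt_add_pt D Q
  rw [h, Nat.choose_succ_succ', Nat.choose_one_right] at this
  push_cast at this
  linarith

lemma VDiv_zero (P : C.Point) : C.VDiv 0 P = C.K + C.pt P := by
  simp [VDiv]

lemma VDiv_succ (i : ℕ) (P : C.Point) : C.VDiv (i + 1) P = C.VDiv i P + C.pt P := by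
  rw [VDiv, VDiv, add_assoc, Nat.cast_succ, add_smul _ 1, one_smul]

lemma h0_VDiv (i : ℕ) (P : C.Point) : (C.h0 (C.VDiv i P) : ℤ) = C.genus + i := by
  rw [VDiv, C.h0_K_add_of_deg_pos (by rw [deg_smul_pt]; omega), deg_smul_pt]
  ring

end SmoothProjCurve

/-- Proposition 2.2(1) of the paper.
Let `C` be a smooth projective connected curve of genus `g` over `ℂ`, `i ≥ 0`
an integer and `P` a point of `C`.  Let `V = H⁰(C, ω_C((i+1)P))` be the
complete linear system of sections of `ω_C((i+1)P)`.  Then the weight of `P`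
as a ramification point of `V` equals `g + wt(P)`, where `wt(P)` is the
Weierstrass weight of `P`. -/
theorem weight_at_center_eq_genus_add_weierstrass_weight
    (C : SmoothProjCurve) (i : ℕ) (P : C.Point) :
    C.wt (C.VDiv i P) P = (C.genus : ℤ) + C.wW P := by
  induction i with
  | zero =>
    have h0_K_add_pt : C.h0 (C.K + C.pt P) = C.h0 C.K := by
      have := C.h0_VDiv 0 P
      rw [C.VDiv_zero] at this
      rw [C.h0_canonical]
      omega
    rw [C.VDiv_zero, C.wt_add_pt_of_h0_eq h0_K_add_pt, C.h0_canonical, SmoothProjCurve.wW, add_comm]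
  | succ i ih =>
    have h0_succ : C.h0 (C.VDiv i P + C.pt P) = C.h0 (C.VDiv i P) + 1 := by
      have := C.h0_VDiv (i + 1) P
      rw [C.VDiv_succ] at this
      have := C.h0_VDiv i P
      omega
    rw [C.VDiv_succ, C.wt_add_pt_of_h0_eq_succ h0_succ, ih]
end
end

section
/- Let O be a local ring and r a nonnegative integer. Let M be a matrix with r+2 rows and r+1 columns with entries in O, let M_1 be the submatrix obtained by removing the last row of M, and M_2 the submatrix obtained by removing the last two rows. Assume that the matrix obtained from M_1 by reducing entries modulo the maximal ideal has rank at least r. Let z := det M_1. Then there exist u, v ∈ O such that: (1) the ideal (z, u) equals the ideal of all maximal (r×r) minors of M_2; (2) the ideal (z, v) equals the ideal of all maximal ((r+1)×(r+1)) minors of M; and (3) the ideal (z, uv) equals the ideal generated by the two maximal minors of M obtained by removing the last row and by removing the last-but-one row, respectively. -/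
/-!
Write `N = M₁`, `m` for the last row of `M`, and `D j b` for the determinant of `N` with its row
`j` replaced by `b`, so that `adjugate N c j = D j e_c`. Up to sign, the maximal minors of `M₂`
are the `D (last) e_c`, and those of `M` are `z` and the `D j m`. Sylvester's identity
`det N * det (N with rows j, j' replaced by b, b') = D j b * D j' b' - D j' b * D j b'`
gives `D k₀ e_{c₀} * D j b ≡ D j e_{c₀} * D k₀ b` modulo `z`, and the rank hypothesis provides
`k₀`, `c₀` with `D k₀ e_{c₀}` a unit. So `u = D (last) e_{c₀}` and `v = D k₀ m` work.
-/

open Matrix Polynomial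

theorem RingHom.mapMatrix_updateRow {R S n : Type*} [CommRing R] [CommRing S] [Fintype n]
    [DecidableEq n] (f : R →+* S) (A : Matrix n n R) (j : n) (b : n → R) :
    f.mapMatrix (A.updateRow j b) = (f.mapMatrix A).updateRow j (f ∘ b) :=
  map_updateRow ..

theorem Submodule.exists_apply_eq_zero_imp_eq_zero_of_finrank_le_one {K ι : Type*} [Field K]
    [Finite ι] [Nonempty ι] (W : Submodule K (ι → K)) (hW : Module.finrank K W ≤ 1) :
    ∃ c : ι, ∀ v ∈ W, v c = 0 → v = 0 := by
  obtain ⟨g, hg⟩ := finrank_le_one_iff.mp hW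
  obtain ⟨c, hc⟩ : ∃ c, ∀ a : K, a * (g : ι → K) c = 0 → a • (g : ι → K) = 0 := by
    by_cases hg0 : (g : ι → K) = 0
    · exact ⟨Classical.arbitrary ι, fun a _ => by simp [hg0]⟩
    · obtain ⟨c, hc⟩ := Function.ne_iff.mp hg0
      exact ⟨c, fun a ha => by simp [(mul_eq_zero.mp ha).resolve_right hc]⟩
  refine ⟨c, fun v hv hvc => ?_⟩
  obtain ⟨a, ha⟩ := hg ⟨v, hv⟩
  have hv' : a • (g : ι → K) = v := congrArg Subtype.val ha
  rw [← hv'] at hvc ⊢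
  exact hc a hvc

theorem Ideal.span_pair_eq_of_isUnit_mul_sub_mem {R : Type*} [CommRing R] {z w a b : R}
    (hw : IsUnit w) (h : w * a - b ∈ Ideal.span {z}) :
    Ideal.span {z, a} = Ideal.span {z, b} := by
  obtain ⟨t, ht⟩ := Ideal.mem_span_singleton'.mp h
  obtain ⟨w', hw'⟩ := hw.exists_left_inv
  refine le_antisymm (Ideal.span_le.mpr ?_) (Ideal.span_le.mpr ?_) <;>
    refine Set.insert_subset (Ideal.subset_span (by simp)) (Set.singleton_subset_iff.mpr ?_) <;>
    rw [SetLike.mem_coe, Ideal.mem_span_pair]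
  · exact ⟨w' * t, w', by linear_combination w' * ht + a * hw'⟩
  · exact ⟨-t, w, by linear_combination -ht⟩

theorem Ideal.span_pair_le_span_pair_of_dvd {R : Type*} [CommRing R] (z : R) {x y : R}
    (h : x ∣ y) : Ideal.span {z, y} ≤ Ideal.span {z, x} := by
  rw [Ideal.span_insert, Ideal.span_insert]
  exact sup_le_sup_left (Ideal.span_singleton_le_span_singleton.mpr h) _

theorem Ideal.neg_one_pow_mul_mem_iff {R : Type*} [CommRing R] (I : Ideal R) (k : ℕ) {x : R} :
    (-1) ^ k * x ∈ I ↔ x ∈ I :=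
  I.unit_mul_mem_iff_mem (isUnit_neg_one.pow k)

namespace Matrix

variable {R : Type*} [CommRing R]

section Sylvester

variable {n : Type*} [Fintype n] [DecidableEq n]

theorem det_updateRow_updateRow_self_swap (A : Matrix n n R) {j j' : n} (h : j ≠ j')
    (b : n → R) : ((A.updateRow j b).updateRow j' (A j)).det = -(A.updateRow j' b).det := by
  have hswap : (A.updateRow j b).updateRow j' (A j)
      = (A.updateRow j' b).submatrix (Equiv.swap j j') id := by
    ext i k
    rcases eq_or_ne i j' with rfl | h'
    · simp [updateRow_ne h]
    rcases eq_or_ne i j with rfl | h''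
    · simp [h]
    · simp [h', h'', Equiv.swap_apply_of_ne_of_ne h'' h']
  rw [hswap, det_permute, Equiv.Perm.sign_swap h]
  simp

theorem det_mul_det_updateRow_updateRow_of_isUnit {A : Matrix n n R} (hA : IsUnit A.det)
    {j j' : n} (h : j ≠ j') (b₁ b₂ : n → R) :
    A.det * ((A.updateRow j b₁).updateRow j' b₂).det
      = (A.updateRow j b₁).det * (A.updateRow j' b₂).det
        - (A.updateRow j' b₁).det * (A.updateRow j b₂).det := by
  obtain ⟨c, rfl⟩ : ∃ c : n → R, ∑ k, c k • A k = b₂ :=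
    ⟨b₂ ᵥ* A⁻¹, by rw [← vecMul_eq_sum, vecMul_vecMul, nonsing_inv_mul _ hA, vecMul_one]⟩
  -- Rows other than `j` of `A.updateRow j b₁` are rows of `A`, so after the split only the
  -- terms of rows `j` and `j'` survive in `det ((A.updateRow j b₁).updateRow j' b₂)`.
  have hsplit : ∑ k, c k • A k
      = c j • A j + ∑ k, Function.update c j 0 k • (A.updateRow j b₁) k := by
    rw [← Finset.add_sum_erase _ _ (Finset.mem_univ j),
      ← Finset.add_sum_erase _ _ (Finset.mem_univ j)]
    simp only [Function.update_self, zero_smul, zero_add]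
    congr 1
    refine Finset.sum_congr rfl fun k hk => ?_
    rw [Function.update_of_ne (Finset.ne_of_mem_erase hk),
      updateRow_ne (Finset.ne_of_mem_erase hk)]
  rw [det_updateRow_sum, det_updateRow_sum, hsplit, det_updateRow_add, det_updateRow_smul,
    det_updateRow_sum, det_updateRow_updateRow_self_swap A h, Function.update_of_ne h.symm]
  simp only [smul_eq_mul]
  ring

theorem det_mul_det_updateRow_updateRow (A : Matrix n n R) {j j' : n} (h : j ≠ j')
    (b₁ b₂ : n → R) :
    A.det * ((A.updateRow j b₁).updateRow j' b₂).det
      = (A.updateRow j b₁).det * (A.updateRow j' b₂).det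
        - (A.updateRow j' b₁).det * (A.updateRow j b₂).det := by
  -- `A` is `charmatrix (-A)` at `X = 0`, and the monic determinant of `charmatrix (-A)`
  -- becomes a unit in the total ring of fractions of `R[X]`.
  set B := charmatrix (-A)
  let φ := algebraMap R[X] (FractionRing R[X])
  have hB : IsUnit (φ.mapMatrix B).det := by
    rw [← RingHom.map_det]
    exact IsLocalization.map_units _ (⟨_, (charpoly_monic (-A)).mem_nonZeroDivisors⟩ :
      nonZeroDivisors R[X])
  have hBX : B.det * ((B.updateRow j (C ∘ b₁)).updateRow j' (C ∘ b₂)).det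
      = (B.updateRow j (C ∘ b₁)).det * (B.updateRow j' (C ∘ b₂)).det
        - (B.updateRow j' (C ∘ b₁)).det * (B.updateRow j (C ∘ b₂)).det := by
    apply IsFractionRing.injective R[X] (FractionRing R[X])
    simpa only [map_mul, map_sub, RingHom.map_det, RingHom.mapMatrix_updateRow] using
      det_mul_det_updateRow_updateRow_of_isUnit hB h (φ ∘ C ∘ b₁) (φ ∘ C ∘ b₂)
  have hB0 : (evalRingHom 0).mapMatrix B = A := by
    ext i k
    by_cases hik : i = k <;> simp [B, hik]
  have hC0 : ∀ b : n → R, evalRingHom 0 ∘ C ∘ b = b := fun b => by ext; simp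
  simpa only [map_mul, map_sub, RingHom.map_det, RingHom.mapMatrix_updateRow, hB0, hC0] using
    congrArg (evalRingHom 0) hBX

theorem det_updateRow_mul_det_updateRow_sub_mem_span (A : Matrix n n R) (j j' : n)
    (b₁ b₂ : n → R) :
    (A.updateRow j b₁).det * (A.updateRow j' b₂).det
      - (A.updateRow j' b₁).det * (A.updateRow j b₂).det ∈ Ideal.span {A.det} := by
  rcases eq_or_ne j j' with rfl | h
  · simp
  · rw [← det_mul_det_updateRow_updateRow A h]
    exact Ideal.mem_span_singleton.mpr (dvd_mul_right _ _)

end Sylvester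

theorem mulVec_insertNth_zero {m : Type*} {n : ℕ}
    (S : Matrix m (Fin (n + 1)) R) (c : Fin (n + 1)) (w : Fin n → R) :
    S *ᵥ c.insertNth 0 w = S.submatrix id c.succAbove *ᵥ w := by
  ext i
  simp [mulVec, dotProduct, Fin.sum_univ_succAbove _ c]

section Field

variable {K : Type*} [Field K]

theorem exists_mulVec_submatrix_succAbove_injective {m : Type*} [Fintype m] {n : ℕ}
    (S : Matrix m (Fin (n + 1)) K) (h : n ≤ S.rank) :
    ∃ c : Fin (n + 1), Function.Injective (S.submatrix id c.succAbove).mulVecLin := by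
  have hker : Module.finrank K (LinearMap.ker S.mulVecLin) ≤ 1 := by
    have := LinearMap.finrank_range_add_finrank_ker S.mulVecLin
    rw [Module.finrank_fin_fun] at this
    rw [rank] at h
    omega
  obtain ⟨c, hc⟩ :=
    (LinearMap.ker S.mulVecLin).exists_apply_eq_zero_imp_eq_zero_of_finrank_le_one hker
  refine ⟨c, (injective_iff_map_eq_zero _).mpr fun w hw => ?_⟩
  have h0 : c.insertNth (0 : K) w = 0 :=
    hc _ (by simpa [mulVec_insertNth_zero] using hw) (Fin.insertNth_apply_same ..)
  ext i
  simpa using congrFun h0 (c.succAbove i)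

theorem exists_det_submatrix_succAbove_ne_zero {n : ℕ}
    (A : Matrix (Fin (n + 1)) (Fin (n + 1)) K) (h : n ≤ A.rank) :
    ∃ k c : Fin (n + 1), (A.submatrix k.succAbove c.succAbove).det ≠ 0 := by
  obtain ⟨c, hc⟩ := exists_mulVec_submatrix_succAbove_injective A h
  have hrank : n ≤ (A.submatrix id c.succAbove)ᵀ.rank := by
    rw [rank_transpose, rank, LinearMap.finrank_range_of_inj hc, Module.finrank_fin_fun]
  obtain ⟨k, hk⟩ := exists_mulVec_submatrix_succAbove_injective _ hrank
  refine ⟨k, c, fun hdet => ?_⟩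
  obtain ⟨v, hv0, hv⟩ := exists_mulVec_eq_zero_iff.mpr
    (show ((A.submatrix id c.succAbove)ᵀ.submatrix id k.succAbove).det = 0 by
      rw [← hdet, ← det_transpose]; rfl)
  exact hv0 (hk (by simpa using hv))

end Field

theorem exists_isUnit_det_submatrix_succAbove {O : Type*} [CommRing O] [IsLocalRing O]
    {n : ℕ} (A : Matrix (Fin (n + 1)) (Fin (n + 1)) O)
    (h : n ≤ (A.map (IsLocalRing.residue O)).rank) :
    ∃ k c : Fin (n + 1), IsUnit (A.submatrix k.succAbove c.succAbove).det := by
  obtain ⟨k, c, hkc⟩ := exists_det_submatrix_succAbove_ne_zero _ h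
  refine ⟨k, c, (IsLocalRing.residue_ne_zero_iff_isUnit _).mp ?_⟩
  rwa [RingHom.map_det, RingHom.mapMatrix_apply, ← submatrix_map]

theorem adjugate_apply_last {n : ℕ} (N : Matrix (Fin (n + 1)) (Fin (n + 1)) R)
    (c : Fin (n + 1)) :
    adjugate N c (Fin.last n)
      = (-1) ^ (n + c : ℕ) * ((N.submatrix Fin.castSucc id).submatrix id c.succAbove).det := by
  rw [adjugate_fin_succ_eq_det_submatrix, Fin.val_last, Fin.succAbove_last]
  rfl

theorem det_submatrix_succAbove_castSucc {n : ℕ} (M : Matrix (Fin (n + 2)) (Fin (n + 1)) R)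
    (j : Fin (n + 1)) :
    (M.submatrix j.castSucc.succAbove id).det
      = (-1) ^ (n + j : ℕ)
        * ((M.submatrix Fin.castSucc id).updateRow j (M (Fin.last _))).det := by
  rw [det_succ_row _ (Fin.last n), det_succ_row _ j, Finset.mul_sum]
  refine Finset.sum_congr rfl fun c _ => ?_
  have hrows : j.castSucc.succAbove ∘ Fin.castSucc = Fin.castSucc ∘ j.succAbove :=
    funext fun i => Fin.castSucc_succAbove_castSucc
  have hsign : (-1 : R) ^ (n + c : ℕ) = (-1) ^ (n + j : ℕ) * (-1) ^ (j + c : ℕ) := by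
    rw [← pow_add, show n + j + (j + c : ℕ) = n + c + 2 * j by ring, pow_add _ (n + c : ℕ),
      pow_mul, neg_one_sq, one_pow, mul_one]
  simp [submatrix_updateRow_succAbove, Fin.succAbove_last, hrows, hsign]
  ring

section UnitAdjugateEntry

variable {r : ℕ} {N : Matrix (Fin (r + 1)) (Fin (r + 1)) R} {k₀ c₀ : Fin (r + 1)}

theorem span_det_updateRow_eq_of_isUnit_adjugate (hw : IsUnit (adjugate N c₀ k₀))
    (j : Fin (r + 1)) (b : Fin (r + 1) → R) :
    Ideal.span {N.det, (N.updateRow j b).det}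
      = Ideal.span {N.det, adjugate N c₀ j * (N.updateRow k₀ b).det} := by
  rw [adjugate_apply] at hw ⊢
  exact Ideal.span_pair_eq_of_isUnit_mul_sub_mem hw
    (det_updateRow_mul_det_updateRow_sub_mem_span N k₀ j _ b)

theorem det_updateRow_mem_span_of_isUnit_adjugate (hw : IsUnit (adjugate N c₀ k₀))
    (j : Fin (r + 1)) (b : Fin (r + 1) → R) :
    (N.updateRow j b).det ∈ Ideal.span {N.det, adjugate N c₀ j * (N.updateRow k₀ b).det} :=
  span_det_updateRow_eq_of_isUnit_adjugate hw j b ▸ Ideal.subset_span (by simp)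

theorem span_det_adjugate_last_eq_of_isUnit_adjugate (hw : IsUnit (adjugate N c₀ k₀)) :
    Ideal.span {N.det, adjugate N c₀ (Fin.last r)}
      = Ideal.span (Set.range fun c : Fin (r + 1) =>
          ((N.submatrix Fin.castSucc id).submatrix id c.succAbove).det) := by
  have hadj : ∀ c, adjugate N c (Fin.last r) ∈ Ideal.span (Set.range fun c : Fin (r + 1) =>
      ((N.submatrix Fin.castSucc id).submatrix id c.succAbove).det) := fun c => by
    rw [adjugate_apply_last]
    exact Ideal.mul_mem_left _ _ (Ideal.subset_span ⟨c, rfl⟩)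
  refine le_antisymm (Ideal.span_le.mpr (Set.insert_subset ?_ ?_)) (Ideal.span_le.mpr ?_)
  · rw [SetLike.mem_coe, det_eq_sum_mul_adjugate_row N (Fin.last r)]
    exact Ideal.sum_mem _ fun c _ => Ideal.mul_mem_left _ _ (hadj c)
  · exact Set.singleton_subset_iff.mpr (hadj c₀)
  · rintro _ ⟨c, rfl⟩
    have h := Ideal.span_pair_le_span_pair_of_dvd _ (dvd_mul_right _ _)
      (det_updateRow_mem_span_of_isUnit_adjugate hw (Fin.last r) (Pi.single c 1))
    rw [← adjugate_apply N c, adjugate_apply_last N c] at h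
    exact (Ideal.neg_one_pow_mul_mem_iff _ _).mp h

end UnitAdjugateEntry

theorem span_det_updateRow_last_eq_of_isUnit_adjugate {r : ℕ}
    {M : Matrix (Fin (r + 2)) (Fin (r + 1)) R} {k₀ c₀ : Fin (r + 1)}
    (hw : IsUnit (adjugate (M.submatrix Fin.castSucc id) c₀ k₀)) :
    Ideal.span {(M.submatrix Fin.castSucc id).det,
        ((M.submatrix Fin.castSucc id).updateRow k₀ (M (Fin.last _))).det}
      = Ideal.span (Set.range fun k : Fin (r + 2) => (M.submatrix k.succAbove id).det) := by
  have hz : (M.submatrix (Fin.last (r + 1)).succAbove id).det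
      = (M.submatrix Fin.castSucc id).det := by
    rw [Fin.succAbove_last]
  refine le_antisymm (Ideal.span_le.mpr (Set.insert_subset ?_ ?_)) (Ideal.span_le.mpr ?_)
  · exact Ideal.subset_span ⟨Fin.last (r + 1), hz⟩
  · rw [Set.singleton_subset_iff, SetLike.mem_coe, ← Ideal.neg_one_pow_mul_mem_iff _ (r + k₀),
      ← det_submatrix_succAbove_castSucc]
    exact Ideal.subset_span ⟨_, rfl⟩
  · rintro _ ⟨k, rfl⟩
    induction k using Fin.lastCases with
    | last => exact hz ▸ Ideal.subset_span (by simp)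
    | cast j =>
      simp only [SetLike.mem_coe, det_submatrix_succAbove_castSucc]
      exact Ideal.mul_mem_left _ _ (Ideal.span_pair_le_span_pair_of_dvd _ (dvd_mul_left _ _)
        (det_updateRow_mem_span_of_isUnit_adjugate hw j _))

end Matrix

/-- Lemma 5.3 of the paper.
Let `O` be a (commutative) local ring and `r` a nonnegative integer.  Let `M`
be a matrix with `r+2` rows and `r+1` columns and entries in `O`, let `M₁` be
the submatrix obtained by removing the last row of `M` (here realised as
`M.submatrix Fin.castSucc id`), and `M₂` the submatrix obtained by removing
the last two rows (realised as `M.submatrix (fun i => i.castSucc.castSucc) id`).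
Assume that the matrix obtained from `M₁` by reducing its entries modulo the
maximal ideal has rank at least `r` over the residue field.  Let
`z := det M₁`.  Then there exist `u, v ∈ O` such that:
1. the ideal `(z, u)` equals the ideal of all maximal (`r × r`) minors of
   `M₂` (the determinants of the square submatrices obtained by deleting one
   column, `c.succAbove` being the embedding skipping the column `c`);
2. the ideal `(z, v)` equals the ideal of all maximal (`(r+1) × (r+1)`)
   minors of `M` (the determinants of the square submatrices obtained by
   deleting one row, `k.succAbove` being the embedding skipping the row `k`);
3. the ideal `(z, u*v)` equals the ideal generated by the two maximal minors
   of `M` obtained by removing the last row (which gives `z`) and by removing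
   the last-but-one row (the row of index `r`, i.e. `(Fin.last r).castSucc`). -/
theorem minors_of_local_matrix {O : Type*} [CommRing O] [IsLocalRing O]
    (r : ℕ) (M : Matrix (Fin (r + 2)) (Fin (r + 1)) O)
    (hrank : r ≤ ((M.submatrix Fin.castSucc id).map (IsLocalRing.residue O)).rank) :
    ∃ u v : O,
      Ideal.span {(M.submatrix Fin.castSucc id).det, u}
        = Ideal.span (Set.range fun c : Fin (r + 1) =>
            ((M.submatrix (fun i : Fin r => i.castSucc.castSucc) id).submatrix
              id c.succAbove).det) ∧
      Ideal.span {(M.submatrix Fin.castSucc id).det, v}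
        = Ideal.span (Set.range fun k : Fin (r + 2) =>
            (M.submatrix k.succAbove id).det) ∧
      Ideal.span {(M.submatrix Fin.castSucc id).det, u * v}
        = Ideal.span {(M.submatrix Fin.castSucc id).det,
            (M.submatrix ((Fin.last r).castSucc.succAbove) id).det} := by
  set N := M.submatrix Fin.castSucc id
  obtain ⟨k₀, c₀, hunit⟩ := exists_isUnit_det_submatrix_succAbove N hrank
  have hw : IsUnit (adjugate N c₀ k₀) := by
    rw [adjugate_fin_succ_eq_det_submatrix]
    exact (isUnit_neg_one.pow _).mul hunit
  refine ⟨adjugate N c₀ (Fin.last r), (N.updateRow k₀ (M (Fin.last _))).det,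
    span_det_adjugate_last_eq_of_isUnit_adjugate hw,
    span_det_updateRow_last_eq_of_isUnit_adjugate hw, ?_⟩
  rw [det_submatrix_succAbove_castSucc, Fin.val_last, ← two_mul, pow_mul, neg_one_sq, one_pow,
    one_mul]
  exact (span_det_updateRow_eq_of_isUnit_adjugate hw _ _).symm
end

section
/- Let C be a smooth projective connected curve of genus g ≥ 1 over the complex numbers and i a nonnegative integer. Then, set-theoretically, SW_i^+ = D_i^+ ∪ E_i^+: a pair (P,Q) ∈ C×C is such that Q is a special ramification point of the complete linear system H^0(ω_C((i+1)P)) if and only if either (g+i−1)Q − (i+1)P is linearly equivalent to an effective divisor, or (g+i+1)Q − (i+1)P is linearly equivalent to a moving effective divisor; equivalently, if and only if h^0(ω_C((i+1)P−(g+i−1)Q)) ≥ 2 or h^0(ω_C((i+1)P−(g+i+1)Q)) ≥ 1. -/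
/-!
Abstract interface for the geometry of a smooth projective connected curve
over `ℂ`, following Cumino–Esteves–Gatto, "Special ramification loci on the
double product of a general curve".
-/

open scoped BigOperators

noncomputable section

namespace SWaux

open SmoothProjCurve

variable (C : SmoothProjCurve)

lemma deg_add (D E : C.Point →₀ ℤ) : C.deg (D + E) = C.deg D + C.deg E := by
  simp only [SmoothProjCurve.deg]
  exact Finsupp.sum_add_index' (fun _ => rfl) (fun _ _ _ => rfl)

lemma deg_zero : C.deg 0 = 0 := by
  simp [SmoothProjCurve.deg]

lemma deg_neg (D : C.Point →₀ ℤ) : C.deg (-D) = -C.deg D := by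
  have h := deg_add C D (-D)
  simp only [add_neg_cancel, deg_zero] at h
  linarith

lemma deg_sub (D E : C.Point →₀ ℤ) : C.deg (D - E) = C.deg D - C.deg E := by
  rw [sub_eq_add_neg, deg_add, deg_neg]; ring

lemma deg_smul_pt (n : ℤ) (P : C.Point) : C.deg (n • C.pt P) = n := by
  rw [SmoothProjCurve.pt, Finsupp.smul_single, smul_eq_mul, mul_one]
  simp [SmoothProjCurve.deg, Finsupp.sum_single_index]

lemma deg_K : C.deg C.K = 2 * (C.genus : ℤ) - 2 := by
  have h := C.riemann_roch C.K
  rw [sub_self, C.h0_trivial, C.h0_canonical] at h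
  have : (C.K.sum fun _ n => n) = C.deg C.K := rfl
  rw [this] at h
  push_cast at h
  linarith

lemma h0_of_deg_neg (D : C.Point →₀ ℤ) (h : C.deg D < 0) : C.h0 D = 0 :=
  C.h0_of_neg D h

lemma rr (D : C.Point →₀ ℤ) :
    (C.h0 D : ℤ) - (C.h0 (C.K - D) : ℤ) = C.deg D + 1 - (C.genus : ℤ) :=
  C.riemann_roch D

/-- The divisor `jQ - (i+1)P`. -/
def Ediv (i : ℕ) (P Q : C.Point) (j : ℕ) : C.Point →₀ ℤ :=
  (j : ℤ) • C.pt Q - ((i : ℤ) + 1) • C.pt P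

/-- `bb j = h⁰(jQ - (i+1)P)`. -/
def bb (i : ℕ) (P Q : C.Point) (j : ℕ) : ℕ := C.h0 (Ediv C i P Q j)

lemma deg_Ediv (i : ℕ) (P Q : C.Point) (j : ℕ) :
    C.deg (Ediv C i P Q j) = (j : ℤ) - (i : ℤ) - 1 := by
  rw [Ediv, deg_sub, deg_smul_pt, deg_smul_pt]; ring

lemma Ediv_succ (i : ℕ) (P Q : C.Point) (j : ℕ) :
    Ediv C i P Q (j + 1) = Ediv C i P Q j + Finsupp.single Q 1 := by
  simp only [Ediv, SmoothProjCurve.pt]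
  push_cast
  rw [add_smul, one_smul]
  abel

lemma bb_succ_le (i : ℕ) (P Q : C.Point) (j : ℕ) :
    bb C i P Q j ≤ bb C i P Q (j + 1) := by
  rw [bb, bb, Ediv_succ]
  exact C.h0_mono _ _

lemma bb_succ_ge (i : ℕ) (P Q : C.Point) (j : ℕ) :
    bb C i P Q (j + 1) ≤ bb C i P Q j + 1 := by
  rw [bb, bb, Ediv_succ]
  exact C.h0_step _ _

lemma bb_mono (i : ℕ) (P Q : C.Point) {j k : ℕ} (h : j ≤ k) :
    bb C i P Q j ≤ bb C i P Q k := by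
  induction k with
  | zero =>
    have hj : j = 0 := by omega
    subst hj; exact le_refl _
  | succ k ih =>
    rcases Nat.lt_or_ge j (k + 1) with h' | h'
    · exact le_trans (ih (by omega)) (bb_succ_le C i P Q k)
    · have : j = k + 1 := by omega
      subst this; exact le_refl _

lemma bb_step (i : ℕ) (P Q : C.Point) {j k : ℕ} (h : j ≤ k) :
    bb C i P Q k ≤ bb C i P Q j + (k - j) := by
  induction k with
  | zero =>
    have : j = 0 := by omega
    subst this; simp
  | succ k ih =>
    rcases Nat.lt_or_ge j (k + 1) with h' | h'
    · have := bb_succ_ge C i P Q k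
      have := ih (by omega)
      omega
    · have : j = k + 1 := by omega
      subst this; simp

lemma bb_eq_zero (i : ℕ) (P Q : C.Point) {j : ℕ} (h : j ≤ i) :
    bb C i P Q j = 0 := by
  apply h0_of_deg_neg
  rw [deg_Ediv]
  omega

/-- Serre-duality identity: `K - (VDiv i P - jQ) = jQ - (i+1)P`. -/
lemma K_sub_eq (i : ℕ) (P Q : C.Point) (j : ℕ) :
    C.K - (C.VDiv i P - (j : ℤ) • C.pt Q) = Ediv C i P Q j := by
  rw [SmoothProjCurve.VDiv, Ediv]
  abel

lemma deg_VDiv_sub (i : ℕ) (P Q : C.Point) (j : ℕ) :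
    C.deg (C.VDiv i P - (j : ℤ) • C.pt Q)
      = 2 * (C.genus : ℤ) - 2 + ((i : ℤ) + 1) - (j : ℤ) := by
  rw [SmoothProjCurve.VDiv, deg_sub, deg_add, deg_K, deg_smul_pt, deg_smul_pt]

/-- Riemann–Roch relating `a j = h⁰(VDiv - jQ)` and `bb j`. -/
lemma rr' (i : ℕ) (P Q : C.Point) (j : ℕ) :
    (C.h0 (C.VDiv i P - (j : ℤ) • C.pt Q) : ℤ) - (bb C i P Q j : ℤ)
      = (C.genus : ℤ) + (i : ℤ) - (j : ℤ) := by
  have h := rr C (C.VDiv i P - (j : ℤ) • C.pt Q)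
  rw [K_sub_eq, deg_VDiv_sub] at h
  rw [bb]
  linarith

lemma h0_VDiv (i : ℕ) (P : C.Point) : C.h0 (C.VDiv i P) = C.genus + i := by
  have h := rr C (C.VDiv i P)
  have h1 : C.deg (C.VDiv i P) = 2 * (C.genus : ℤ) - 2 + ((i : ℤ) + 1) := by
    rw [SmoothProjCurve.VDiv, deg_add, deg_K, deg_smul_pt]
  have h2 : C.h0 (C.K - C.VDiv i P) = 0 := by
    apply h0_of_deg_neg
    rw [deg_sub, deg_K, SmoothProjCurve.VDiv, deg_add, deg_K, deg_smul_pt]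
    omega
  rw [h1, h2] at h
  push_cast at h ⊢
  omega

lemma deg_VDiv_toNat (i : ℕ) (P : C.Point) (hg : 1 ≤ C.genus) :
    (C.deg (C.VDiv i P)).toNat = 2 * C.genus + i - 1 := by
  have h1 : C.deg (C.VDiv i P) = 2 * (C.genus : ℤ) - 2 + ((i : ℤ) + 1) := by
    rw [SmoothProjCurve.VDiv, deg_add, deg_K, deg_smul_pt]
  omega

/-- Truncated Gauss sum. -/
lemma gauss (M : ℤ) (hM : 1 ≤ M) (n : ℕ) :
    2 * (∑ j ∈ Finset.Icc 1 n, max 0 (M - (j : ℤ)))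
      = M * (M - 1) - (max 0 (M - 1 - (n : ℤ))) * (max 0 (M - 1 - (n : ℤ)) + 1) := by
  induction n with
  | zero =>
    rw [Finset.Icc_eq_empty (by omega : ¬ (1:ℕ) ≤ 0), Finset.sum_empty,
      Nat.cast_zero, sub_zero, max_eq_right (by omega : (0:ℤ) ≤ M - 1)]
    ring
  | succ n ih =>
    have hc : ((n + 1 : ℕ) : ℤ) = (n : ℤ) + 1 := by push_cast; ring
    rw [Finset.sum_Icc_succ_top (by omega : 1 ≤ n + 1), mul_add, ih, hc]
    rcases le_or_gt (M - 1 - (n : ℤ)) 0 with h | h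
    · rw [max_eq_left (by omega : M - ((n:ℤ)+1) ≤ 0),
        max_eq_left (by omega : M - 1 - ((n:ℤ)+1) ≤ 0),
        max_eq_left (by omega : M - 1 - (n:ℤ) ≤ 0)]
      ring
    · rw [max_eq_right (by omega : (0:ℤ) ≤ M - ((n:ℤ)+1)),
        max_eq_right (by omega : (0:ℤ) ≤ M - 1 - (n:ℤ))]
      rcases le_or_gt (M - 1 - ((n:ℤ)+1)) 0 with h' | h'
      · rw [max_eq_left h']
        have hu : M - 1 - (n:ℤ) = 1 := by omega
        have hv : M - ((n:ℤ)+1) = 1 := by omega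
        rw [hu, hv]; ring
      · rw [max_eq_right (by omega : (0:ℤ) ≤ M - 1 - ((n:ℤ)+1))]
        ring

/-- `cc j = bb j - max 0 (j - g - i)`, the `j`-th term of the weight. -/
def cc (i : ℕ) (P Q : C.Point) (j : ℕ) : ℤ :=
  (bb C i P Q j : ℤ) - max 0 ((j : ℤ) - (C.genus : ℤ) - (i : ℤ))

lemma cc_nonneg (i : ℕ) (P Q : C.Point) (j : ℕ) : 0 ≤ cc C i P Q j := by
  have h := rr' C i P Q j
  have h0 : (0 : ℤ) ≤ (C.h0 (C.VDiv i P - (j : ℤ) • C.pt Q) : ℤ) := Int.natCast_nonneg _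
  rw [cc]
  have hb : (0 : ℤ) ≤ (bb C i P Q j : ℤ) := Int.natCast_nonneg _
  omega

/-- The weight as a sum of the nonnegative quantities `cc j`. -/
lemma wt_eq (i : ℕ) (P Q : C.Point) (hg : 1 ≤ C.genus) :
    C.wt (C.VDiv i P) Q = ∑ j ∈ Finset.Icc 1 (2 * C.genus + i - 1), cc C i P Q j := by
  have hM : (1 : ℤ) ≤ (C.genus : ℤ) + (i : ℤ) := by omega
  set M : ℤ := (C.genus : ℤ) + (i : ℤ) with hMdef
  set N : ℕ := 2 * C.genus + i - 1 with hNdef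
  rw [SmoothProjCurve.wt, deg_VDiv_toNat C i P hg, h0_VDiv]
  have hsplit : ∀ j ∈ Finset.Icc 1 N,
      (C.h0 (C.VDiv i P - (j : ℤ) • C.pt Q) : ℤ) = cc C i P Q j + max 0 (M - (j : ℤ)) := by
    intro j _
    have h := rr' C i P Q j
    rw [cc]
    omega
  rw [Finset.sum_congr rfl hsplit, Finset.sum_add_distrib]
  have hgauss := gauss M hM N
  have hNM : max 0 (M - 1 - (N : ℤ)) = 0 := by
    rw [max_eq_left]; omega
  rw [hNM] at hgauss
  have h2S : 2 * (∑ j ∈ Finset.Icc 1 N, max 0 (M - (j : ℤ))) = M * (M - 1) := by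
    rw [hgauss]; ring
  have hcast : ((C.genus + i : ℕ) : ℤ) = M := by push_cast; ring
  rw [hcast]
  set S := ∑ j ∈ Finset.Icc 1 N, max 0 (M - (j : ℤ)) with hS
  have : (M - 1) * M = 2 * S := by rw [h2S]; ring
  rw [this]
  omega

lemma bb_le_one_g1 (i : ℕ) (P Q : C.Point) (hg1 : C.genus = 1) :
    bb C i P Q (C.genus + i + 1) ≤ 1 := by
  have h := rr C (Ediv C i P Q (C.genus + i + 1))
  rw [deg_Ediv] at h
  have h2 : C.h0 (C.K - Ediv C i P Q (C.genus + i + 1)) = 0 := by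
    apply h0_of_deg_neg
    rw [deg_sub, deg_K, deg_Ediv]
    push_cast [hg1]
    omega
  rw [h2] at h
  rw [bb]
  push_cast [hg1] at h ⊢
  omega

/-- The core equivalence: special ramification iff `bb (g+i-1) ≥ 1` or
`bb (g+i+1) ≥ 2`. -/
lemma main (i : ℕ) (P Q : C.Point) (hg : 1 ≤ C.genus) :
    2 ≤ C.wt (C.VDiv i P) Q ↔
      1 ≤ bb C i P Q (C.genus + i - 1) ∨ 2 ≤ bb C i P Q (C.genus + i + 1) := by
  rw [wt_eq C i P Q hg]
  constructor
  · intro h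
    by_contra hcon
    push_neg at hcon
    obtain ⟨h1, h2⟩ := hcon
    have hb1 : bb C i P Q (C.genus + i - 1) = 0 := by omega
    have hb2 : bb C i P Q (C.genus + i + 1) ≤ 1 := by omega
    have hle : ∀ j ∈ Finset.Icc 1 (2 * C.genus + i - 1),
        cc C i P Q j ≤ if j = C.genus + i then 1 else 0 := by
      intro j hj
      simp only [Finset.mem_Icc] at hj
      rcases lt_trichotomy j (C.genus + i) with hc | hc | hc
      · rw [if_neg (by omega)]
        have hm := bb_mono C i P Q (show j ≤ C.genus + i - 1 by omega)
        rw [cc]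
        have hz : bb C i P Q j = 0 := by omega
        rw [hz]
        have hmax : max 0 ((j : ℤ) - (C.genus : ℤ) - (i : ℤ)) = 0 := by
          rw [max_eq_left]; omega
        omega
      · rw [if_pos hc, cc]
        have hst := bb_step C i P Q (show C.genus + i - 1 ≤ j by omega)
        have hmax : max 0 ((j : ℤ) - (C.genus : ℤ) - (i : ℤ)) = 0 := by
          rw [max_eq_left]; omega
        omega
      · rw [if_neg (by omega), cc]
        have hst := bb_step C i P Q (show C.genus + i + 1 ≤ j by omega)
        have hmax : max 0 ((j : ℤ) - (C.genus : ℤ) - (i : ℤ))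
            = (j : ℤ) - (C.genus : ℤ) - (i : ℤ) := by
          rw [max_eq_right]; omega
        omega
    have hsum := Finset.sum_le_sum hle
    rw [Finset.sum_ite_eq' (Finset.Icc 1 (2 * C.genus + i - 1)) (C.genus + i)
      (fun _ => (1 : ℤ))] at hsum
    have : (if C.genus + i ∈ Finset.Icc 1 (2 * C.genus + i - 1) then (1:ℤ) else 0) ≤ 1 := by
      split <;> omega
    omega
  · intro h
    rcases h with h1 | h2
    · have hg2 : 2 ≤ C.genus := by
        by_contra hcon
        have : bb C i P Q (C.genus + i - 1) = 0 := bb_eq_zero C i P Q (by omega)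
        omega
      have hxy : C.genus + i - 1 ≠ C.genus + i := by omega
      have hsub : ({C.genus + i - 1, C.genus + i} : Finset ℕ)
          ⊆ Finset.Icc 1 (2 * C.genus + i - 1) := by
        intro x hx'
        simp only [Finset.mem_insert, Finset.mem_singleton] at hx'
        rcases hx' with rfl | rfl <;> simp only [Finset.mem_Icc] <;> omega
      have hkey := Finset.sum_le_sum_of_subset_of_nonneg hsub
        (fun j _ _ => cc_nonneg C i P Q j)
      rw [Finset.sum_pair hxy] at hkey
      have hc1 : 1 ≤ cc C i P Q (C.genus + i - 1) := by
        rw [cc]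
        have hmax : max 0 (((C.genus + i - 1 : ℕ) : ℤ) - (C.genus : ℤ) - (i : ℤ)) = 0 := by
          rw [max_eq_left]; omega
        omega
      have hc2 : 1 ≤ cc C i P Q (C.genus + i) := by
        rw [cc]
        have hm := bb_mono C i P Q (show C.genus + i - 1 ≤ C.genus + i by omega)
        have hmax : max 0 (((C.genus + i : ℕ) : ℤ) - (C.genus : ℤ) - (i : ℤ)) = 0 := by
          rw [max_eq_left]; omega
        omega
      omega
    · have hg2 : 2 ≤ C.genus := by
        by_contra hcon
        have := bb_le_one_g1 C i P Q (by omega)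
        omega
      have hxy : C.genus + i ≠ C.genus + i + 1 := by omega
      have hsub : ({C.genus + i, C.genus + i + 1} : Finset ℕ)
          ⊆ Finset.Icc 1 (2 * C.genus + i - 1) := by
        intro x hx'
        simp only [Finset.mem_insert, Finset.mem_singleton] at hx'
        rcases hx' with rfl | rfl <;> simp only [Finset.mem_Icc] <;> omega
      have hkey := Finset.sum_le_sum_of_subset_of_nonneg hsub
        (fun j _ _ => cc_nonneg C i P Q j)
      rw [Finset.sum_pair hxy] at hkey
      have hc1 : 1 ≤ cc C i P Q (C.genus + i) := by
        rw [cc]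
        have hm : bb C i P Q (C.genus + i + 1) ≤ bb C i P Q (C.genus + i) + 1 :=
          bb_succ_ge C i P Q (C.genus + i)
        have hmax : max 0 (((C.genus + i : ℕ) : ℤ) - (C.genus : ℤ) - (i : ℤ)) = 0 := by
          rw [max_eq_left]; omega
        omega
      have hc2 : 1 ≤ cc C i P Q (C.genus + i + 1) := by
        rw [cc]
        have hmax : max 0 (((C.genus + i + 1 : ℕ) : ℤ) - (C.genus : ℤ) - (i : ℤ)) = 1 := by
          rw [max_eq_right] <;> omega
        omega
      omega

end SWaux


/-- Subsection 5.1 of the paper: `SW_i⁺ = D_i⁺ ∪ E_i⁺`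
set-theoretically.
Let `C` be a smooth projective connected curve of genus `g ≥ 1` over `ℂ` and
`i` a nonnegative integer.  A pair `(P,Q) ∈ C×C` is such that `Q` is a special
ramification point (weight at least `2`) of the complete linear system
`H⁰(ω_C((i+1)P))` if and only if either `(g+i-1)Q - (i+1)P` is linearly
equivalent to an effective divisor (i.e. `h⁰(𝒪_C((g+i-1)Q - (i+1)P)) > 0`), or
`(g+i+1)Q - (i+1)P` is linearly equivalent to a moving effective divisor (i.e.
`h⁰(𝒪_C((g+i+1)Q - (i+1)P)) > 1`); equivalently, if and only if
`h⁰(ω_C((i+1)P - (g+i-1)Q)) ≥ 2` or `h⁰(ω_C((i+1)P - (g+i+1)Q)) ≥ 1`. -/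
theorem special_ramification_iff (C : SmoothProjCurve) (hg : 1 ≤ C.genus)
    (i : ℕ) (P Q : C.Point) :
    (2 ≤ C.wt (C.VDiv i P) Q ↔
      (0 < C.h0 (((C.genus : ℤ) + (i : ℤ) - 1) • C.pt Q - ((i : ℤ) + 1) • C.pt P) ∨
       1 < C.h0 (((C.genus : ℤ) + (i : ℤ) + 1) • C.pt Q - ((i : ℤ) + 1) • C.pt P))) ∧
    (2 ≤ C.wt (C.VDiv i P) Q ↔
      (2 ≤ C.h0 (C.VDiv i P - ((C.genus : ℤ) + (i : ℤ) - 1) • C.pt Q) ∨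
       1 ≤ C.h0 (C.VDiv i P - ((C.genus : ℤ) + (i : ℤ) + 1) • C.pt Q))) := by
  have hs1 : ((C.genus : ℤ) + (i : ℤ) - 1) = ((C.genus + i - 1 : ℕ) : ℤ) := by omega
  have hs2 : ((C.genus : ℤ) + (i : ℤ) + 1) = ((C.genus + i + 1 : ℕ) : ℤ) := by omega
  have hmain := SWaux.main C i P Q hg
  have r1 := SWaux.rr' C i P Q (C.genus + i - 1)
  have r2 := SWaux.rr' C i P Q (C.genus + i + 1)
  rw [hs1, hs2]
  constructor
  · rw [hmain]
    simp only [SWaux.bb, SWaux.Ediv]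
    omega
  · rw [hmain]
    omega
end
end
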